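/- arXiv:1710.04972 — 8 statements merged into one kernel-verified Lean document; each statement's English description precedes it below -/
import Mathlib

section
/- For n ≥ 5, the maximum over all nontrivial g in A_n of (|supp(g)| + c*(g))/2 equals ⌊3n/4⌋. -/
/-!
Every nontrivial cycle has length at least `2`, so `2 c*(g) ≤ |supp g| ≤ n` and hence
`|supp g| + c*(g) ≤ 3n/2`. Conversely, with `n = 4q + r`, a product of `2q` disjoint
transpositions, preceded by a `3`-cycle when `r = 3`, and with one transposition replaced by a
`4`-cycle when `r = 2`, attains `⌊3n/4⌋`; it is even because the sign of `g` is
`(-1)^(|supp g| + c*(g))`.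
-/

open Finset

namespace Equiv.Perm

variable {α : Type*} [Fintype α] [DecidableEq α]

theorem two_mul_card_cycleType_le (σ : Perm α) : 2 * Multiset.card σ.cycleType ≤ #σ.support := by
  rw [← sum_cycleType, mul_comm, ← smul_eq_mul]
  exact Multiset.card_nsmul_le_sum fun _ h => two_le_of_mem_cycleType h

theorem card_support_add_card_cycleType_div_two_le (σ : Perm α) :
    (#σ.support + Multiset.card σ.cycleType) / 2 ≤ 3 * Fintype.card α / 4 := by
  have := σ.two_mul_card_cycleType_le
  have := σ.support.card_le_univ
  omega

theorem exists_mem_alternatingGroup_cycleType_eq {m : Multiset ℕ}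
    (hsum : m.sum ≤ Fintype.card α) (htwo : ∀ a ∈ m, 2 ≤ a)
    (heven : Even (m.sum + Multiset.card m)) :
    ∃ σ ∈ alternatingGroup α, σ.cycleType = m := by
  obtain ⟨σ, hσ⟩ := (exists_with_cycleType_iff α).2 ⟨hsum, htwo⟩
  refine ⟨σ, ?_, hσ⟩
  rw [mem_alternatingGroup, sign_of_cycleType, hσ, heven.neg_one_pow]

end Equiv.Perm

theorem exists_multiset_sum_add_card_div_two_eq {n : ℕ} (hn : 3 ≤ n) :
    ∃ m : Multiset ℕ, m ≠ 0 ∧ (∀ a ∈ m, 2 ≤ a) ∧ m.sum ≤ n ∧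
      Even (m.sum + Multiset.card m) ∧ (m.sum + Multiset.card m) / 2 = 3 * n / 4 := by
  obtain ⟨q, r, hr4, rfl⟩ : ∃ q r, r < 4 ∧ n = 4 * q + r :=
    ⟨n / 4, n % 4, Nat.mod_lt n (by norm_num), (Nat.div_add_mod n 4).symm⟩
  rcases (by omega : r ≤ 1 ∨ r = 2 ∨ r = 3) with hr | rfl | rfl
  · refine ⟨.replicate (2 * q) 2, ?_, fun a ha => (Multiset.eq_of_mem_replicate ha).ge, ?_⟩
    · exact Multiset.card_pos.1 (by rw [Multiset.card_replicate]; omega)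
    · simp only [Multiset.sum_replicate, Multiset.card_replicate, Nat.even_iff, smul_eq_mul]
      omega
  · refine ⟨4 ::ₘ .replicate (2 * q - 1) 2, Multiset.cons_ne_zero, ?_, ?_⟩
    · simpa using fun a ha => (Multiset.eq_of_mem_replicate ha).ge
    · simp only [Multiset.sum_cons, Multiset.card_cons, Multiset.sum_replicate,
        Multiset.card_replicate, Nat.even_iff, smul_eq_mul]
      omega
  · refine ⟨3 ::ₘ .replicate (2 * q) 2, Multiset.cons_ne_zero, ?_, ?_⟩
    · simpa using fun a ha => (Multiset.eq_of_mem_replicate ha).ge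
    · simp only [Multiset.sum_cons, Multiset.card_cons, Multiset.sum_replicate,
        Multiset.card_replicate, Nat.even_iff, smul_eq_mul]
      omega

/-- The maximum of `(|supp g| + c*(g))/2` over nontrivial `g ∈ A_n` is `⌊3n/4⌋`. -/
theorem max_l_value (n : ℕ) (hn : 5 ≤ n) :
    IsGreatest {m : ℕ | ∃ g ∈ alternatingGroup (Fin n), g ≠ 1 ∧
      m = (g.support.card + g.cycleType.card) / 2} (3 * n / 4) := by
  refine ⟨?_, ?_⟩
  · obtain ⟨m, hm0, htwo, hsum, heven, hval⟩ := exists_multiset_sum_add_card_div_two_eq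
      (by omega : 3 ≤ n)
    obtain ⟨g, hgA, hg⟩ := Equiv.Perm.exists_mem_alternatingGroup_cycleType_eq (α := Fin n)
      (by simpa using hsum) htwo heven
    refine ⟨g, hgA, fun h => hm0 ?_, ?_⟩
    · rw [← hg, h, Equiv.Perm.cycleType_one]
    · rw [← Equiv.Perm.sum_cycleType, hg, hval]
  · rintro k ⟨g, -, -, rfl⟩
    simpa using g.card_support_add_card_cycleType_div_two_le
end

section
/- If a and b are single cycles in S_n whose supports intersect in m ≥ 1 points, then the product ab has at most m nontrivial cycles in its disjoint cycle decomposition. -/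
/-!
Every nontrivial cycle `c` of `a * b` contains a point `x` with `b x ∈ supp a ∩ supp b`.
Otherwise, if `c` meets `supp b`, then `a * b` agrees with `b` on `supp c ∩ supp b`, which is
therefore `b`-invariant and, `b` being a cycle, contains all of `supp b`, in particular `b⁻¹ z`
for any `z ∈ supp a ∩ supp b`; and if `c` misses `supp b`, then `a * b` agrees with `a` on
`supp c`, which therefore contains `supp a`, hence meets `supp b`.
As a cycle of `a * b` is the cycle of each point of its support, there are at most
`|b⁻¹ (supp a ∩ supp b)| = m` of them.
-/

open Equiv Equiv.Perm Finset

namespace Equiv.Perm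

variable {α : Type*} [Fintype α] [DecidableEq α]

theorem IsCycle.support_subset_of_mapsTo {g : Perm α} (hg : g.IsCycle) {S : Finset α} {x : α}
    (hxS : x ∈ S) (hxg : x ∈ g.support) (hS : ∀ y ∈ S, g y ∈ S) : g.support ⊆ S := by
  intro y hy
  obtain ⟨i, rfl⟩ := hg.exists_pow_eq (mem_support.1 hxg) (mem_support.1 hy)
  exact Set.MapsTo.perm_pow (s := (S : Set α)) hS i hxS

theorem card_cycleFactorsFinset_le_of_forall_exists_mem {σ : Perm α} {T : Finset α}
    (h : ∀ c ∈ σ.cycleFactorsFinset, ∃ x ∈ T, x ∈ c.support) :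
    #σ.cycleFactorsFinset ≤ #T := by
  refine card_le_card_of_surjOn σ.cycleOf fun c hc => ?_
  obtain ⟨x, hxT, hxc⟩ := h c hc
  exact ⟨x, hxT, (cycle_is_cycleOf hxc hc).symm⟩

theorem IsCycle.exists_mem_support_apply_mem_support_inter {a b c : Perm α}
    (ha : a.IsCycle) (hb : b.IsCycle) (hab : (a.support ∩ b.support).Nonempty)
    (hc : c ∈ (a * b).cycleFactorsFinset) :
    ∃ x ∈ c.support, b x ∈ a.support ∩ b.support := by
  by_contra! h
  have hc_eq : ∀ x ∈ c.support, c x = a (b x) := (mem_cycleFactorsFinset_iff.1 hc).2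
  obtain ⟨z, hz⟩ := hab
  by_cases hcb : ∃ x ∈ c.support, x ∈ b.support
  · obtain ⟨x, hxc, hxb⟩ := hcb
    have hb_inv : ∀ y ∈ c.support ∩ b.support, b y ∈ c.support ∩ b.support := by
      intro y hy
      rw [mem_inter] at hy ⊢
      have hby : b y ∈ b.support := apply_mem_support.2 hy.2
      have hc_y : c y = b y := by
        rw [hc_eq y hy.1, ← notMem_support]
        exact fun hbya => h y hy.1 (mem_inter.2 ⟨hbya, hby⟩)
      exact ⟨hc_y ▸ apply_mem_support.2 hy.1, hby⟩
    have hsupp := hb.support_subset_of_mapsTo (mem_inter.2 ⟨hxc, hxb⟩) hxb hb_inv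
    have hz' : b.symm z ∈ b.support := by
      rw [← apply_mem_support, apply_symm_apply]; exact (mem_inter.1 hz).2
    exact h _ (mem_inter.1 (hsupp hz')).1 (by rwa [apply_symm_apply])
  · push Not at hcb
    have hc_a : ∀ x ∈ c.support, c x = a x := fun x hx => by
      rw [hc_eq x hx, notMem_support.1 (hcb x hx)]
    obtain ⟨x, hx⟩ := (mem_cycleFactorsFinset_iff.1 hc).1.nonempty_support
    have hxa : x ∈ a.support := mem_support.2 (hc_a x hx ▸ mem_support.1 hx)
    have hsupp := ha.support_subset_of_mapsTo hx hxa fun y hy =>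
      hc_a y hy ▸ apply_mem_support.2 hy
    exact hcb z (hsupp (mem_inter.1 hz).1) (mem_inter.1 hz).2

end Equiv.Perm

/-- Bertram's lemma: if cycles `a`, `b` have supports meeting in `m ≥ 1` points,
then `ab` has at most `m` nontrivial cycles. -/
theorem cycles_intersecting (n : ℕ) (a b : Equiv.Perm (Fin n))
    (ha : a.IsCycle) (hb : b.IsCycle) (m : ℕ)
    (hm : m = (a.support ∩ b.support).card) (hm1 : 1 ≤ m) :
    (a * b).cycleType.card ≤ m := by
  have hab : (a.support ∩ b.support).Nonempty := card_pos.1 (hm ▸ hm1)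
  rw [cycleType_def, Multiset.card_map, hm, ← card_map b.symm.toEmbedding]
  refine card_cycleFactorsFinset_le_of_forall_exists_mem fun c hc => ?_
  obtain ⟨x, hxc, hx⟩ := ha.exists_mem_support_apply_mem_support_inter hb hab hc
  exact ⟨x, mem_map_equiv.2 hx, hxc⟩
end

section
/- Fix an odd prime p. Every odd-length cycle a in A_n with |supp(a)| ≥ p can be written as a product of at most 3 permutations each of order dividing p. -/
/-!
An odd cycle of length `m ≥ p` is already a product `x * y` of two elements of order dividing
`p`; the third factor is `1`. For `m = p` take `x = 1`. For `p < m < 2p`, two `p`-cycles whose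
common part `u₁ v₁ u₂ ⋯ v_k u_{k+1}` (with `2k + 1 = 2p - m`) is traversed in the same order
multiply to an `m`-cycle. For `m > 2p`, an `m`-cycle is `τ * c` with `τ` an `(m - p + 1)`-cycle
and `c` a `p`-cycle meeting `τ` in a single point `w`. By induction `τ⁻¹ = X * Y`, and
conjugating by a power of `τ` we may assume that `X` fixes `w`; then `X⁻¹` and `c` are disjoint,
so `τ * c = Y⁻¹ * (X⁻¹ * c)` with both factors of order dividing `p`.
-/

namespace List

variable {α : Type*}

theorem exists_eq_append_of_le_length {n : ℕ} (l : List α) (h : n ≤ l.length) :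
    ∃ l₁ l₂, l₁.length = n ∧ l = l₁ ++ l₂ :=
  ⟨l.take n, l.drop n, length_take_of_le h, (take_append_drop n l).symm⟩

variable [DecidableEq α]

theorem Nodup.of_count_le {l l' : List α} (h : l.Nodup) (hc : ∀ a, l'.count a ≤ l.count a) :
    l'.Nodup :=
  nodup_iff_count_le_one.2 fun a => (hc a).trans (nodup_iff_count_le_one.1 h a)

theorem formPerm_map_equiv (f : Equiv.Perm α) : ∀ l : List α,
    (l.map f).formPerm = f * l.formPerm * f⁻¹
  | [] => by simp
  | [x] => by simp
  | x :: y :: l => by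
    rw [map_cons, map_cons, formPerm_cons_cons, ← map_cons, formPerm_map_equiv f (y :: l),
      formPerm_cons_cons, Equiv.swap_apply_apply]
    group

theorem formPerm_cons_mul_swap {u v : α} {l : List α} (hu : u ∉ l) (hv : v ∉ l) :
    (v :: l).formPerm * Equiv.swap u v = Equiv.swap u v * (u :: l).formPerm := by
  have hl : (v :: l).map (Equiv.swap u v) = u :: l := by
    rw [map_cons, Equiv.swap_apply_right, map_congr_left fun z hz => Equiv.swap_apply_of_ne_of_ne
      (ne_of_mem_of_not_mem hz hu) (ne_of_mem_of_not_mem hz hv), map_id']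
  rw [← hl, formPerm_map_equiv, Equiv.swap_inv, ← mul_assoc, ← mul_assoc, Equiv.swap_mul_self,
    one_mul]

theorem formPerm_append_singleton {x : α} {l : List α} (h : (x :: l).Nodup) :
    (l ++ [x]).formPerm = (x :: l).formPerm := by
  rw [← formPerm_rotate_one _ h, rotate_cons_succ, rotate_zero]

theorem formPerm_cons_mul_formPerm_cons {b : α} {A : List α} :
    ∀ {B : List α}, (b :: (B ++ A)).Nodup →
      (b :: A).formPerm * (b :: B).formPerm = (b :: (B ++ A)).formPerm
  | [], _ => by simp
  | c :: B, h => by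
    have hb : b ∉ A := fun hbA => (nodup_cons.1 h).1 (by simp [hbA])
    have hc : c ∉ A := fun hcA => by simp_all
    have h' : (c :: (B ++ A)).Nodup := (nodup_cons.1 h).2
    rw [formPerm_cons_cons, cons_append, formPerm_cons_cons, ← formPerm_cons_mul_formPerm_cons h',
      ← mul_assoc, ← mul_assoc, Equiv.swap_comm, formPerm_cons_mul_swap hc hb]

theorem formPerm_interleave_append_mul_formPerm : ∀ {U V A B : List α},
    U.length = V.length + 1 → (U ++ B ++ V ++ A).Nodup →
      (U.interleave V ++ A).formPerm * (U.interleave V ++ B).formPerm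
        = (U ++ B ++ V ++ A).formPerm
  | [u], [], A, B, _, h => by simpa using formPerm_cons_mul_formPerm_cons (by simpa using h)
  | u :: U, v :: V, A, B, hUV, h => by
    have hA : (v :: u :: (U.interleave V ++ A)).Nodup := h.of_count_le fun a => by
      simp only [count_cons, count_append, count_interleave]; split_ifs <;> omega
    have hB : (v :: (U.interleave V ++ B)).Nodup := h.of_count_le fun a => by
      simp only [count_cons, count_append, count_interleave]; split_ifs <;> omega
    have hrot : (u :: (U ++ B ++ v :: V ++ A)).Nodup := h.of_count_le fun a => by
      simp only [count_cons, count_append]; split_ifs <;> omega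
    have ih := formPerm_interleave_append_mul_formPerm (U := U) (V := V) (A := A ++ [u])
      (B := B ++ [v]) (by simpa using hUV) (h.of_count_le fun a => by
        simp only [count_cons, count_append, count_nil]; split_ifs <;> omega)
    -- Conjugating by `swap u v` removes the common head `u v`; rotating `u` and `v` to the ends
    -- gives the same identity for `U`, `V`, `A ++ [u]`, `B ++ [v]`.
    simp only [cons_interleave, cons_append]
    rw [formPerm_cons_cons, formPerm_cons_cons, mul_assoc, ← mul_assoc (formPerm _),
      formPerm_cons_mul_swap (nodup_cons.1 (nodup_cons.1 hA).2).1
        fun hv => (nodup_cons.1 hA).1 (mem_cons_of_mem u hv), ← mul_assoc, ← mul_assoc,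
      Equiv.swap_mul_self, one_mul, ← formPerm_append_singleton (nodup_cons.1 hA).2,
      ← formPerm_append_singleton hB, append_assoc, append_assoc, ih,
      ← formPerm_append_singleton hrot]
    simp
  | [], _, _, _, h, _ | _ :: _ :: _, [], _, _, h, _ => by simp at h

variable [Fintype α]

theorem support_formPerm_subset {l l' : List α} (hl : l.Nodup) (h2 : 2 ≤ l.length) (h : l' ⊆ l) :
    l'.formPerm.support ⊆ l.formPerm.support := by
  rw [support_formPerm_of_nodup l hl fun x hx => by simp [hx] at h2]
  exact (support_formPerm_le l').trans fun z hz => mem_toFinset.2 (h (mem_toFinset.1 hz))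

theorem support_formPerm_ssubset {l l' : List α} (hl : l.Nodup) (h2 : 2 ≤ l.length) (h : l' ⊆ l)
    (hlen : l'.length < l.length) : l'.formPerm.support ⊂ l.formPerm.support := by
  refine (support_formPerm_subset hl h2 h).ssubset_of_ne fun heq => ?_
  have hcard := (Finset.card_le_card (support_formPerm_le l')).trans (toFinset_card_le l')
  rw [heq, support_formPerm_of_nodup l hl fun x hx => by simp [hx] at h2,
    toFinset_card_of_nodup hl] at hcard
  omega

end List

namespace Equiv.Perm

variable {α : Type*} [DecidableEq α] [Fintype α]

/-- The strict inclusion makes `x` fix a point moved by `σ`, which is where the induction attaches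
the next `p`-cycle. -/
def HasPFactorization (p : ℕ) (σ : Perm α) : Prop :=
  ∃ x y : Perm α, x ^ p = 1 ∧ y ^ p = 1 ∧ x.support ⊂ σ.support ∧ y.support ⊆ σ.support ∧
    x * y = σ

theorem HasPFactorization.exists_apply_eq_self {p : ℕ} {σ : Perm α} (hσ : σ.IsCycle)
    (h : HasPFactorization p σ) {w : α} (hw : w ∈ σ.support) :
    ∃ x y : Perm α, x ^ p = 1 ∧ y ^ p = 1 ∧ x.support ⊆ σ.support ∧ y.support ⊆ σ.support ∧
      x * y = σ ∧ x w = w := by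
  obtain ⟨x, y, hx, hy, hxσ, hyσ, hxy⟩ := h
  obtain ⟨z, hzσ, hzx⟩ := Finset.exists_of_ssubset hxσ
  obtain ⟨i, rfl⟩ := hσ.exists_pow_eq (mem_support.1 hzσ) (mem_support.1 hw)
  have hconj : ∀ f : Perm α, f.support ⊆ σ.support →
      (σ ^ i * f * (σ ^ i)⁻¹).support ⊆ σ.support := fun f hf a ha => by
    rw [support_conj, Finset.mem_map] at ha
    obtain ⟨b, hb, rfl⟩ := ha
    exact pow_apply_mem_support.2 (hf hb)
  refine ⟨σ ^ i * x * (σ ^ i)⁻¹, σ ^ i * y * (σ ^ i)⁻¹, by rw [conj_pow, hx, mul_one,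
    mul_inv_cancel], by rw [conj_pow, hy, mul_one, mul_inv_cancel], hconj x hxσ.subset,
    hconj y hyσ, ?_, ?_⟩
  · calc σ ^ i * x * (σ ^ i)⁻¹ * (σ ^ i * y * (σ ^ i)⁻¹) = σ ^ i * σ * (σ ^ i)⁻¹ := by
          rw [← hxy]; group
      _ = σ := by rw [(Commute.self_pow σ i).eq.symm, mul_inv_cancel_right]
  · simp [notMem_support.1 hzx]

theorem HasPFactorization.mul_of_inv {p : ℕ} {τ c : Perm α} {w : α} (hτ : τ.IsCycle)
    (h : HasPFactorization p τ⁻¹) (hw : w ∈ τ.support) (hc : c ^ p = 1)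
    (hcτ : ∀ z ∈ τ.support, z ≠ w → c z = z) (hτσ : τ.support ⊂ (τ * c).support)
    (hcσ : c.support ⊆ (τ * c).support) : HasPFactorization p (τ * c) := by
  obtain ⟨X, Y, hX, hY, hXτ, hYτ, hXY, hXw⟩ :=
    h.exists_apply_eq_self hτ.inv (by rwa [support_inv])
  rw [support_inv] at hXτ hYτ
  have hXc : Disjoint X c := fun z => by
    by_cases hz : z ∈ τ.support
    · by_cases hzw : z = w
      · exact Or.inl (hzw ▸ hXw)
      · exact Or.inr (hcτ z hz hzw)
    · exact Or.inl (notMem_support.1 fun hzX => hz (hXτ hzX))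
  refine ⟨Y⁻¹, X⁻¹ * c, by rw [inv_pow, hY, inv_one], ?_, ?_, ?_, ?_⟩
  · rw [hXc.inv_left.commute.mul_pow, inv_pow, hX, hc, inv_one, one_mul]
  · rw [support_inv]
    exact hYτ.trans_ssubset hτσ
  · refine (support_mul_le _ _).trans (Finset.union_subset ?_ hcσ)
    rw [support_inv]
    exact hXτ.trans hτσ.subset
  · rw [← mul_assoc, ← mul_inv_rev, hXY, inv_inv]

open List

variable {p : ℕ}

theorem hasPFactorization_formPerm_of_length_eq {l : List α} (hl : l.Nodup) (hp : 1 < p)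
    (hlp : l.length = p) : HasPFactorization p l.formPerm :=
  ⟨[].formPerm, l.formPerm, by simp, hlp ▸ formPerm_pow_length_eq_one_of_nodup _ hl,
    support_formPerm_ssubset hl (by omega) (nil_subset l) (by simp; omega), subset_rfl, one_mul _⟩

theorem hasPFactorization_formPerm_append {U B V A : List α} (hl : (U ++ B ++ V ++ A).Nodup)
    (hUV : U.length = V.length + 1) (hBA : B.length = A.length) (hA : A ≠ [])
    (hp : U.length + V.length + A.length = p) :
    HasPFactorization p (U ++ B ++ V ++ A).formPerm := by
  have h2 : 2 ≤ (U ++ B ++ V ++ A).length := by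
    have := length_pos_iff.2 hA
    simp; omega
  have hxl : (U.interleave V ++ A).Nodup := hl.of_count_le fun a => by
    simp only [count_append, count_interleave]; omega
  have hyl : (U.interleave V ++ B).Nodup := hl.of_count_le fun a => by
    simp only [count_append, count_interleave]; omega
  have hxsub : U.interleave V ++ A ⊆ U ++ B ++ V ++ A := fun z => by
    simp only [mem_append, interleave_perm_append.mem_iff]
    tauto
  have hysub : U.interleave V ++ B ⊆ U ++ B ++ V ++ A := fun z => by
    simp only [mem_append, interleave_perm_append.mem_iff]
    tauto
  refine ⟨_, _, ?_, ?_, support_formPerm_ssubset hl h2 hxsub ?_,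
    support_formPerm_subset hl h2 hysub, formPerm_interleave_append_mul_formPerm hUV hl⟩
  · simpa [← hp, add_assoc] using formPerm_pow_length_eq_one_of_nodup _ hxl
  · simpa [← hp, add_assoc, hBA] using formPerm_pow_length_eq_one_of_nodup _ hyl
  · have := length_pos_iff.2 hA
    simp; omega

theorem hasPFactorization_formPerm_of_lt_length {l : List α} (hl : l.Nodup)
    (hodd : Odd l.length) (hpl : p < l.length) (hl2p : l.length < 2 * p) :
    HasPFactorization p l.formPerm := by
  obtain ⟨k, hk⟩ : ∃ k, 2 * p = l.length + 2 * k + 1 := by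
    obtain ⟨j, hj⟩ := hodd
    exact ⟨p - j - 1, by omega⟩
  obtain ⟨c, hc⟩ : ∃ c, l.length = p + c := ⟨l.length - p, by omega⟩
  obtain ⟨U, l₁, hU, rfl⟩ := exists_eq_append_of_le_length (n := k + 1) l (by omega)
  obtain ⟨B, l₂, hB, rfl⟩ := exists_eq_append_of_le_length (n := c) l₁ (by simp at hc; omega)
  obtain ⟨V, A, hV, rfl⟩ := exists_eq_append_of_le_length (n := k) l₂ (by simp at hc; omega)
  simp only [length_append] at hc hk hpl
  simpa only [append_assoc] using hasPFactorization_formPerm_append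
    (by simpa only [append_assoc] using hl) (by omega) (by omega)
    (by rintro rfl; simp at hc hpl; omega) (by omega)

theorem HasPFactorization.formPerm_cons_append {w : α} {Q R : List α}
    (hl : (w :: (Q ++ R)).Nodup) (hQ : Q ≠ []) (hR : R ≠ []) (hp : Q.length + 1 = p)
    (h : HasPFactorization p (w :: R).formPerm⁻¹) :
    HasPFactorization p (w :: (Q ++ R)).formPerm := by
  have hwR : (w :: R).Nodup := hl.sublist ((sublist_append_right Q R).cons_cons w)
  have hwQ : (w :: Q).Nodup := hl.sublist ((sublist_append_left Q R).cons_cons w)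
  have hR2 : 2 ≤ (w :: R).length := by
    have := length_pos_iff.2 hR
    simp; omega
  have h2 : 2 ≤ (w :: (Q ++ R)).length := by
    simp at hR2 ⊢; omega
  have hglue := formPerm_cons_mul_formPerm_cons hl
  rw [← hglue]
  refine h.mul_of_inv (w := w) (isCycle_formPerm hwR hR2) ?_
    (hp ▸ formPerm_pow_length_eq_one_of_nodup _ hwQ) ?_
    (hglue ▸ support_formPerm_ssubset hl h2 ?_ ?_) (hglue ▸ support_formPerm_subset hl h2 ?_)
  · rw [mem_support, formPerm_apply_mem_ne_self_iff _ hwR _ mem_cons_self]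
    exact hR2
  · intro z hz hzw
    have hzR : z ∈ R := (mem_cons.1 (mem_toFinset.1 (support_formPerm_le _ hz))).resolve_left hzw
    refine formPerm_apply_of_notMem fun hzQ => ?_
    exact disjoint_of_nodup_append (nodup_cons.1 hl).2 ((mem_cons.1 hzQ).resolve_left hzw) hzR
  · exact cons_subset_cons w (subset_append_right Q R)
  · have := length_pos_iff.2 hQ
    simp; omega
  · exact cons_subset_cons w (subset_append_left Q R)

theorem hasPFactorization_formPerm (hp : 1 < p) (hpodd : Odd p) {l : List α} (hl : l.Nodup)
    (hodd : Odd l.length) (hpl : p ≤ l.length) : HasPFactorization p l.formPerm := by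
  induction hm : l.length using Nat.strong_induction_on generalizing l with
  | _ m ih =>
  subst hm
  rcases hpl.eq_or_lt with hlp | hlp
  · exact hasPFactorization_formPerm_of_length_eq hl hp hlp.symm
  rcases lt_or_ge l.length (2 * p) with hl2p | hl2p
  · exact hasPFactorization_formPerm_of_lt_length hl hodd hlp hl2p
  · obtain ⟨w, l, rfl⟩ := exists_cons_of_length_pos (by omega : 0 < l.length)
    obtain ⟨Q, R, hQ, rfl⟩ := exists_eq_append_of_le_length (n := p - 1) l (by simp at hl2p; omega)
    simp only [length_cons, length_append] at ih hodd hl2p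
    have hwR : (w :: R).reverse.Nodup :=
      nodup_reverse.2 (hl.sublist ((sublist_append_right Q R).cons_cons w))
    refine HasPFactorization.formPerm_cons_append hl (by rintro rfl; simp at hQ; omega)
      (by rintro rfl; simp at hl2p; omega) (by omega) ?_
    rw [← formPerm_reverse]
    refine ih (R.length + 1) (by omega) hwR ?_ (by simp; omega) (by simp)
    rw [length_reverse, length_cons, Nat.odd_iff]
    rw [Nat.odd_iff] at hodd hpodd
    omega

end Equiv.Perm

theorem odd_cycle_pwidth_le_three_general (p n : ℕ) (hp : p.Prime) (hodd : Odd p)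
    (a : Equiv.Perm (Fin n)) (ha : a.IsCycle)
    (hlen : Odd a.support.card) (hge : p ≤ a.support.card) :
    ∃ x y z : Equiv.Perm (Fin n), x ^ p = 1 ∧ y ^ p = 1 ∧ z ^ p = 1 ∧
      a = x * y * z := by
  obtain ⟨x₀, hx₀⟩ := ha.nonempty_support
  have hcyc : a.cycleOf x₀ = a := ha.cycleOf_eq (Equiv.Perm.mem_support.1 hx₀)
  have hl : (a.toList x₀).length = a.support.card := by
    rw [Equiv.Perm.length_toList, hcyc]
  obtain ⟨x, y, hx, hy, -, -, hxy⟩ := Equiv.Perm.hasPFactorization_formPerm hp.one_lt hodd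
    (Equiv.Perm.nodup_toList a x₀) (hl ▸ hlen) (hl ▸ hge)
  refine ⟨x, y, 1, hx, hy, one_pow p, ?_⟩
  rw [mul_one, hxy, Equiv.Perm.formPerm_toList, hcyc]

/-- Every odd-length cycle of length at least `p` (an odd prime) is a product of
at most 3 permutations of order dividing `p`. -/
theorem odd_cycle_pwidth_le_three (p n : ℕ) (hp : p.Prime) (hodd : Odd p)
    (hn : p ≤ n) (a : Equiv.Perm (Fin n)) (ha : a.IsCycle)
    (hlen : Odd a.support.card) (hge : p ≤ a.support.card) :
    ∃ x y z : Equiv.Perm (Fin n), x ^ p = 1 ∧ y ^ p = 1 ∧ z ^ p = 1 ∧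
      a = x * y * z :=
  odd_cycle_pwidth_le_three_general p n hp hodd a ha hlen hge
end

section
/- Fix a prime p ≥ 5. For every n with 2p > n > (4p+3)/3, the set of products of two elements of order dividing p in A_n is a proper subset of A_n; in particular the p-width of A_n is at least 3 for such n. -/
/-!
Write `n = 3j + 2k` with `k` even and `4j + 3k > 2p`, and let `g` be a product of `j` disjoint
`3`-cycles and `k` disjoint transpositions on all `n` points: it is even, has no fixed points and
has `j + k` cycles. If `g = xy` with `x ^ p = y ^ p = 1`, then since `n < 2p` and `g` moves every
point, `x` and `y` are `p`-cycles whose supports cover all points and meet. Writing each of them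
as a product of `p - 1` transpositions along a path gives a connected graph, and Ree's inequality
`c(σ) + n ≤ #transpositions + 2 · #components` for a product `σ` of transpositions yields
`j + k + n ≤ 2p`, that is `4j + 3k ≤ 2p`.
-/

open Equiv Equiv.Perm Finset

namespace Setoid

variable {α : Type*}

noncomputable def numClasses (r : Setoid α) : ℕ := Nat.card (Quotient r)

def mergeClasses (r : Setoid α) (a b : α) : Setoid α where
  r x y := r x y ∨ (r x a ∨ r x b) ∧ (r y a ∨ r y b)
  iseqv := by
    refine ⟨fun x => Or.inl (r.refl' x), ?_, ?_⟩
    · rintro x y (h | ⟨hx, hy⟩)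
      exacts [Or.inl (r.symm' h), Or.inr ⟨hy, hx⟩]
    · rintro x y z (hxy | ⟨hx, hy⟩) (hyz | ⟨hy', hz⟩)
      · exact Or.inl (r.trans' hxy hyz)
      · exact Or.inr ⟨hy'.imp (r.trans' hxy) (r.trans' hxy), hz⟩
      · exact Or.inr ⟨hx, hy.imp (r.trans' (r.symm' hyz)) (r.trans' (r.symm' hyz))⟩
      · exact Or.inr ⟨hx, hz⟩

variable {r s : Setoid α} {a b : α}

lemma le_mergeClasses : r ≤ r.mergeClasses a b := fun _ _ h => Or.inl h

lemma mergeClasses_rel : r.mergeClasses a b a b :=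
  Or.inr ⟨Or.inl (r.refl' a), Or.inr (r.refl' b)⟩

lemma mergeClasses_le (h : r ≤ s) (hab : s a b) : r.mergeClasses a b ≤ s := by
  have hb : ∀ {x}, r x a ∨ r x b → s x b := by
    rintro x (hx | hx)
    exacts [s.trans' (h hx) hab, h hx]
  rintro x y (hxy | ⟨hx, hy⟩)
  exacts [h hxy, s.trans' (hb hx) (s.symm' (hb hy))]

lemma mergeClasses_eq_self (hab : r a b) : r.mergeClasses a b = r :=
  le_antisymm (mergeClasses_le le_rfl hab) le_mergeClasses

lemma numClasses_eq_card (h : ∀ x y, r x y → x = y) : r.numClasses = Nat.card α :=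
  (Nat.card_eq_of_bijective (Quotient.mk r) ⟨fun x y hxy => h x y (Quotient.exact hxy),
    Quotient.mk_surjective⟩).symm

lemma numClasses_eq_one [Nonempty α] (h : ∀ x y, r x y) : r.numClasses = 1 := by
  rw [numClasses, Nat.card_eq_one_iff_unique]
  refine ⟨⟨?_⟩, ⟨Quotient.mk r (Classical.arbitrary α)⟩⟩
  rintro ⟨x⟩ ⟨y⟩
  exact Quotient.sound (h x y)

variable [Finite α]

lemma numClasses_le_of_le (h : r ≤ s) : s.numClasses ≤ r.numClasses :=
  Nat.card_le_card_of_surjective (Quotient.map' id h) <| by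
    rintro ⟨x⟩
    exact ⟨Quotient.mk r x, rfl⟩

lemma card_le_numClasses {β : Type*} {f : α → β} (hf : Function.Surjective f)
    (hr : ∀ x y, r x y → f x = f y) : Nat.card β ≤ r.numClasses :=
  Nat.card_le_card_of_surjective (Quotient.lift f hr) <| by
    intro z
    obtain ⟨x, rfl⟩ := hf z
    exact ⟨Quotient.mk r x, rfl⟩

/-- Away from the class of `b`, the `r`-classes are the classes of `r.mergeClasses a b`. -/
lemma numClasses_mergeClasses_add_one (hab : ¬ r a b) :
    (r.mergeClasses a b).numClasses + 1 = r.numClasses := by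
  classical
  set m := r.mergeClasses a b
  let F : Quotient r → Option (Quotient m) := Quotient.lift
    (fun x => if r x b then none else some (Quotient.mk m x)) fun x y hxy => by
      by_cases hx : r x b
      · rw [if_pos hx, if_pos (r.trans' (r.symm' hxy) hx)]
      · rw [if_neg hx, if_neg fun hy => hx (r.trans' hxy hy)]
        exact congrArg some (Quotient.sound (le_mergeClasses hxy))
  have hF : Function.Bijective F := by
    constructor
    · rintro ⟨x⟩ ⟨y⟩ hxy
      change (if r x b then _ else _) = (if r y b then _ else _) at hxy
      apply Quotient.sound
      by_cases hx : r x b <;> by_cases hy : r y b <;> simp only [hx, hy, if_true, if_false,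
        reduceCtorEq, Option.some.injEq] at hxy
      · exact r.trans' hx (r.symm' hy)
      · rcases Quotient.exact hxy with h | ⟨hx', hy'⟩
        · exact h
        · exact r.trans' (hx'.resolve_right hx) (r.symm' (hy'.resolve_right hy))
    · rintro (_ | q)
      · exact ⟨Quotient.mk r b, if_pos (r.refl' b)⟩
      induction q using Quotient.inductionOn with | h x => ?_
      by_cases hx : r x b
      · refine ⟨Quotient.mk r a, (if_neg hab).trans (congrArg some (Quotient.sound ?_))⟩
        exact Or.inr ⟨Or.inl (r.refl' a), Or.inr hx⟩
      · exact ⟨Quotient.mk r x, if_neg hx⟩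
  rw [numClasses, numClasses, Nat.card_eq_of_bijective F hF, Finite.card_option]

lemma numClasses_le_mergeClasses_add_one :
    r.numClasses ≤ (r.mergeClasses a b).numClasses + 1 := by
  by_cases hab : r a b
  · rw [mergeClasses_eq_self hab]
    exact Nat.le_succ _
  · exact (numClasses_mergeClasses_add_one hab).ge

end Setoid

open Setoid

namespace Equiv.Perm

variable {α : Type*}

/-- The number of cycles of `σ`, fixed points included. -/
noncomputable def numCycles (σ : Perm α) : ℕ := (SameCycle.setoid σ).numClasses

lemma sameCycle_setoid_le {τ : Perm α} {s : Setoid α} (h : ∀ x, s x (τ x)) :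
    SameCycle.setoid τ ≤ s := by
  rintro x _ ⟨i, rfl⟩
  induction i using Int.induction_on with
  | zero => exact s.refl' x
  | succ i ih => rw [add_comm, zpow_add, zpow_one, mul_apply]; exact s.trans' ih (h _)
  | pred i ih =>
    rw [sub_eq_neg_add, zpow_add, zpow_neg_one, mul_apply]
    have hstep := h (τ⁻¹ ((τ ^ (-(i : ℤ))) x))
    rw [show ∀ y, τ (τ⁻¹ y) = y from τ.apply_symm_apply] at hstep
    exact s.trans' ih (s.symm' hstep)

lemma sameCycle_swap_mul_le (σ : Perm α) (a b : α) [DecidableEq α] :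
    SameCycle.setoid (swap a b * σ) ≤ (SameCycle.setoid σ).mergeClasses a b := by
  refine sameCycle_setoid_le fun z => ?_
  have hz : σ.SameCycle z (σ z) := sameCycle_apply_right.2 (SameCycle.refl σ z)
  change _ ∨ _
  by_cases ha : σ z = a
  · rw [mul_apply, ha, swap_apply_left]
    exact Or.inr ⟨Or.inl (ha ▸ hz), Or.inr (SameCycle.refl σ b)⟩
  by_cases hb : σ z = b
  · rw [mul_apply, hb, swap_apply_right]
    exact Or.inr ⟨Or.inr (hb ▸ hz), Or.inl (SameCycle.refl σ a)⟩
  · rw [mul_apply, swap_apply_of_ne_of_ne ha hb]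
    exact Or.inl hz

/-- Along the `σ`-orbit of `a`, the permutation `swap a b * σ` agrees with `σ` until it reaches
`σ⁻¹ a`, which it sends to `b`. -/
lemma sameCycle_swap_mul_of_not_sameCycle [DecidableEq α] [Finite α] {σ : Perm α} {a b : α}
    (hab : ¬ σ.SameCycle a b) : (swap a b * σ).SameCycle a b := by
  set τ := swap a b * σ
  by_contra hτ
  have horbit : ∀ i : ℕ, τ.SameCycle a ((σ ^ i) a) := by
    intro i
    induction i with
    | zero => exact SameCycle.refl τ a
    | succ i ih =>
      rw [pow_succ', mul_apply]
      have hb : σ ((σ ^ i) a) ≠ b := fun h =>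
        hab (h ▸ sameCycle_apply_right.2 (sameCycle_pow_right.2 (SameCycle.refl σ a)))
      by_cases ha : σ ((σ ^ i) a) = a
      · have : τ ((σ ^ i) a) = b := by simp [τ, ha]
        exact absurd (this ▸ sameCycle_apply_right.2 ih) hτ
      · have : τ ((σ ^ i) a) = σ ((σ ^ i) a) := swap_apply_of_ne_of_ne ha hb
        exact this ▸ sameCycle_apply_right.2 ih
  obtain ⟨i, hi⟩ := (show σ.SameCycle a (σ⁻¹ a) from ⟨-1, by simp⟩).exists_nat_pow_eq
  have hlast : τ (σ⁻¹ a) = b := by simp [τ]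
  exact hτ (hlast ▸ sameCycle_apply_right.2 (hi ▸ horbit i))

lemma numCycles_one : numCycles (1 : Perm α) = Nat.card α :=
  numClasses_eq_card fun _ _ => sameCycle_one.1

variable [Finite α]

lemma numCycles_swap_mul_le [DecidableEq α] (σ : Perm α) (a b : α) :
    numCycles (swap a b * σ) ≤ numCycles σ + 1 := by
  have hle := sameCycle_swap_mul_le (swap a b * σ) a b
  rw [swap_mul_self_mul] at hle
  exact numClasses_le_mergeClasses_add_one.trans (Nat.add_le_add_right (numClasses_le_of_le hle) 1)

lemma numCycles_swap_mul_add_one_le [DecidableEq α] {σ : Perm α} {a b : α}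
    (hab : ¬ σ.SameCycle a b) : numCycles (swap a b * σ) + 1 ≤ numCycles σ := by
  have hτ := sameCycle_swap_mul_of_not_sameCycle hab
  have hle := sameCycle_swap_mul_le (swap a b * σ) a b
  rw [swap_mul_self_mul, mergeClasses_eq_self hτ] at hle
  rw [numCycles, numCycles, ← numClasses_mergeClasses_add_one (r := SameCycle.setoid σ) hab]
  exact Nat.add_le_add_right (numClasses_le_of_le (mergeClasses_le hle hτ)) 1

lemma card_le_numCycles {β : Type*} {σ : Perm α} {f : α → β} (hf : Function.Surjective f)
    (hσ : ∀ x, f (σ x) = f x) : Nat.card β ≤ numCycles σ :=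
  card_le_numClasses hf fun _ _ h =>
    sameCycle_setoid_le (s := Setoid.ker f) (fun x => (hσ x).symm) h

end Equiv.Perm

/-- Connectivity in the graph on `α` with edge list `L`. -/
def componentSetoid {α : Type*} (L : List (α × α)) : Setoid α :=
  Relation.EqvGen.setoid fun u v => (u, v) ∈ L

noncomputable def numComponents {α : Type*} (L : List (α × α)) : ℕ :=
  (componentSetoid L).numClasses

section Components

variable {α : Type*} {L L' : List (α × α)}

lemma componentSetoid_of_mem {u v : α} (h : (u, v) ∈ L) : componentSetoid L u v :=
  Relation.EqvGen.rel _ _ h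

lemma componentSetoid_mono (h : L ⊆ L') : componentSetoid L ≤ componentSetoid L' :=
  eqvGen_mono fun _ _ huv => h huv

lemma componentSetoid_cons (e : α × α) (L : List (α × α)) :
    componentSetoid (e :: L) = (componentSetoid L).mergeClasses e.1 e.2 := by
  refine le_antisymm (eqvGen_le fun u v huv => ?_)
    (mergeClasses_le (componentSetoid_mono (List.subset_cons_self e L))
      (componentSetoid_of_mem List.mem_cons_self))
  rcases List.mem_cons.1 huv with rfl | huv
  exacts [mergeClasses_rel, le_mergeClasses (componentSetoid_of_mem huv)]

lemma componentSetoid_zip_tail (l : List α) :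
    ∀ u ∈ l, ∀ v ∈ l, componentSetoid (l.zip l.tail) u v := by
  match l with
  | [] => simp
  | [x] => simp only [List.mem_singleton]; rintro _ rfl _ rfl; exact Setoid.refl' _ _
  | x :: y :: l =>
    set s := componentSetoid ((x :: y :: l).zip (y :: l))
    have hy : ∀ u ∈ x :: y :: l, s u y := by
      intro u hu
      rcases List.mem_cons.1 hu with rfl | hu
      · exact componentSetoid_of_mem List.mem_cons_self
      · exact componentSetoid_mono (List.subset_cons_self _ _)
          (componentSetoid_zip_tail (y :: l) u hu y List.mem_cons_self)
    exact fun u hu v hv => s.trans' (hy u hu) (s.symm' (hy v hv))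

lemma numComponents_nil : numComponents ([] : List (α × α)) = Nat.card α :=
  numClasses_eq_card fun _ _ h => eqvGen_le (s := ⊥) (fun _ _ h => absurd h List.not_mem_nil) h

end Components

namespace Equiv.Perm

variable {α : Type*} [DecidableEq α]

def prodSwaps (L : List (α × α)) : Perm α := (L.map fun e => swap e.1 e.2).prod

lemma prodSwaps_cons (e : α × α) (L : List (α × α)) :
    prodSwaps (e :: L) = swap e.1 e.2 * prodSwaps L := by
  simp [prodSwaps]

lemma prodSwaps_append (L L' : List (α × α)) :
    prodSwaps (L ++ L') = prodSwaps L * prodSwaps L' := by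
  simp [prodSwaps]

lemma prodSwaps_zip_tail (l : List α) : prodSwaps (l.zip l.tail) = l.formPerm := by
  match l with
  | [] | [_] => rfl
  | x :: y :: l => rw [List.tail_cons, List.zip_cons_cons, prodSwaps_cons, List.formPerm_cons_cons,
      ← prodSwaps_zip_tail (y :: l), List.tail_cons]

lemma componentSetoid_apply_prodSwaps (L : List (α × α)) (z : α) :
    componentSetoid L z (prodSwaps L z) := by
  induction L with
  | nil => exact (componentSetoid []).refl' z
  | cons e L ih =>
    set s := componentSetoid (e :: L)
    have hz : s z (prodSwaps L z) := componentSetoid_mono (List.subset_cons_self e L) ih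
    have he : s e.1 e.2 := componentSetoid_of_mem List.mem_cons_self
    rw [prodSwaps_cons, mul_apply]
    refine s.trans' hz ?_
    rcases eq_or_ne (prodSwaps L z) e.1 with h1 | h1
    · rw [h1, swap_apply_left]; exact he
    rcases eq_or_ne (prodSwaps L z) e.2 with h2 | h2
    · rw [h2, swap_apply_right]; exact s.symm' he
    · rw [swap_apply_of_ne_of_ne h1 h2]

/-- The inequality behind Ree's theorem: every edge either joins two components of the graph,
or splits at most one cycle of the product. -/
theorem numCycles_prodSwaps_add_card_le [Finite α] (L : List (α × α)) :
    numCycles (prodSwaps L) + Nat.card α ≤ L.length + 2 * numComponents L := by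
  induction L with
  | nil =>
    rw [show prodSwaps ([] : List (α × α)) = 1 from rfl, numCycles_one, numComponents_nil]
    omega
  | cons e L ih =>
    rw [prodSwaps_cons, List.length_cons, numComponents, componentSetoid_cons]
    by_cases he : componentSetoid L e.1 e.2
    · have := numCycles_swap_mul_le (prodSwaps L) e.1 e.2
      rw [mergeClasses_eq_self he]
      unfold numComponents at ih
      omega
    · have hcyc : ¬ (prodSwaps L).SameCycle e.1 e.2 := fun h =>
        he (sameCycle_setoid_le (componentSetoid_apply_prodSwaps L) h)
      have := numCycles_swap_mul_add_one_le hcyc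
      have := numClasses_mergeClasses_add_one he
      unfold numComponents at ih
      omega

variable [Fintype α]

lemma IsCycle.exists_prodSwaps {f : Perm α} (hf : f.IsCycle) :
    ∃ L : List (α × α), prodSwaps L = f ∧ L.length + 1 = #f.support ∧
      ∀ u ∈ f.support, ∀ v ∈ f.support, componentSetoid L u v := by
  obtain ⟨a, ha⟩ := hf.nonempty_support
  have hlen : (toList f a).length = #f.support := by
    rw [length_toList, hf.cycleOf_eq (mem_support.1 ha)]
  have hmem : ∀ u ∈ f.support, u ∈ toList f a := fun u hu =>
    mem_toList_iff.2 ⟨hf.sameCycle (mem_support.1 ha) (mem_support.1 hu), ha⟩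
  refine ⟨(toList f a).zip (toList f a).tail, ?_, ?_, fun u hu v hv =>
    componentSetoid_zip_tail _ u (hmem u hu) v (hmem v hv)⟩
  · rw [prodSwaps_zip_tail, formPerm_toList, hf.cycleOf_eq (mem_support.1 ha)]
  · have := hf.two_le_card_support
    simp only [List.length_zip, List.length_tail, hlen]
    omega


lemma eq_one_or_isCycle_of_pow_prime_eq_one {p : ℕ} (hp : p.Prime) (hα : Fintype.card α < 2 * p)
    {z : Perm α} (hz : z ^ p = 1) : z = 1 ∨ z.IsCycle ∧ #z.support = p := by
  refine or_iff_not_imp_left.2 fun h1 => ?_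
  have : Fact p.Prime := ⟨hp⟩
  have hord : orderOf z = p := orderOf_eq_prime hz h1
  have hcyc : z.IsCycle := isCycle_of_prime_order (hord ▸ hp)
    (hord ▸ (card_le_univ _).trans_lt hα)
  exact ⟨hcyc, hcyc.orderOf ▸ hord⟩

theorem numCycles_mul_add_card_le {x y : Perm α} (hx : x.IsCycle) (hy : y.IsCycle)
    (hcover : ∀ v, v ∈ x.support ∨ v ∈ y.support)
    (hmeet : (x.support ∩ y.support).Nonempty) :
    numCycles (x * y) + Fintype.card α ≤ #x.support + #y.support := by
  obtain ⟨Lx, rfl, hLx, hx⟩ := hx.exists_prodSwaps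
  obtain ⟨Ly, rfl, hLy, hy⟩ := hy.exists_prodSwaps
  obtain ⟨w, hw⟩ := hmeet
  rw [mem_inter] at hw
  set s := componentSetoid (Lx ++ Ly)
  have hconn : ∀ v, s v w := fun v => (hcover v).elim
    (fun hv => componentSetoid_mono (List.subset_append_left Lx Ly) (hx v hv w hw.1))
    (fun hv => componentSetoid_mono (List.subset_append_right Lx Ly) (hy v hv w hw.2))
  have : Nonempty α := ⟨w⟩
  have h1 : numComponents (Lx ++ Ly) = 1 :=
    numClasses_eq_one fun u v => s.trans' (hconn u) (s.symm' (hconn v))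
  have := numCycles_prodSwaps_add_card_le (Lx ++ Ly)
  rw [prodSwaps_append, h1, List.length_append, Nat.card_eq_fintype_card] at this
  omega

theorem numCycles_add_card_le_of_pow_prime {p : ℕ} (hp : p.Prime) (hpα : p < Fintype.card α)
    (hα : Fintype.card α < 2 * p) {g x y : Perm α} (hg : ∀ v, g v ≠ v) (hx : x ^ p = 1)
    (hy : y ^ p = 1) (hxy : g = x * y) : numCycles g + Fintype.card α ≤ 2 * p := by
  have hcover : ∀ v, v ∈ x.support ∨ v ∈ y.support := by
    by_contra! ⟨v, hvx, hvy⟩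
    rw [notMem_support] at hvx hvy
    exact hg v (by rw [hxy, mul_apply, hvy, hvx])
  have hunion : Fintype.card α ≤ #x.support + #y.support :=
    (card_le_card fun v _ => mem_union.2 (hcover v)).trans (card_union_le _ _)
  have hcases := fun {z : Perm α} (hz : z ^ p = 1) =>
    eq_one_or_isCycle_of_pow_prime_eq_one hp hα hz
  have hsupp : ∀ z : Perm α, z ^ p = 1 → #z.support ≤ p := fun z hz =>
    (hcases hz).elim (fun h => by simp [h]) (fun h => h.2.le)
  obtain ⟨hxc, hxp⟩ := (hcases hx).resolve_left fun h => by
    rw [h, support_one, card_empty] at hunion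
    have := hsupp y hy
    omega
  obtain ⟨hyc, hyp⟩ := (hcases hy).resolve_left fun h => by
    rw [h, support_one, card_empty] at hunion
    have := hsupp x hx
    omega
  have hmeet : (x.support ∩ y.support).Nonempty := by
    rw [← card_pos]
    have := card_union_add_card_inter x.support y.support
    have := card_le_univ (x.support ∪ y.support)
    omega
  have := numCycles_mul_add_card_le hxc hyc hcover hmeet
  rw [← hxy, hxp, hyp] at this
  omega

/-- The product of `j` disjoint `3`-cycles and `k` disjoint transpositions. -/
def blockRotation (j k : ℕ) : Perm ((Fin j × Fin 3) ⊕ (Fin k × Fin 2)) :=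
  sumCongr (prodCongrRight fun _ => finRotate 3) (prodCongrRight fun _ => finRotate 2)

variable {j k : ℕ}

lemma sign_blockRotation (hk : Even k) : sign (blockRotation j k) = 1 := by
  simp [blockRotation, sign_sumCongr, sign_prodCongrRight, sign_finRotate, hk.neg_one_pow]

lemma blockRotation_apply_ne (v : (Fin j × Fin 3) ⊕ (Fin k × Fin 2)) :
    blockRotation j k v ≠ v := by
  rcases v with ⟨a, i⟩ | ⟨a, i⟩ <;> fin_cases i <;> simp [blockRotation]

lemma blockIndex_blockRotation (v : (Fin j × Fin 3) ⊕ (Fin k × Fin 2)) :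
    Sum.map Prod.fst Prod.fst (blockRotation j k v) = Sum.map Prod.fst Prod.fst v := by
  rcases v with ⟨a, i⟩ | ⟨a, i⟩ <;> rfl

lemma exists_mem_alternatingGroup_apply_ne_add_le_numCycles (hk : Even k) :
    ∃ g ∈ alternatingGroup (Fin (3 * j + 2 * k)),
      (∀ v, g v ≠ v) ∧ j + k ≤ numCycles g := by
  let e : (Fin j × Fin 3) ⊕ (Fin k × Fin 2) ≃ Fin (3 * j + 2 * k) :=
    Fintype.equivFinOfCardEq (by simp; ring)
  refine ⟨e.permCongr (blockRotation j k), ?_, fun v h => ?_, ?_⟩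
  · rw [mem_alternatingGroup, sign_permCongr, sign_blockRotation hk]
  · rw [permCongr_apply, ← e.eq_symm_apply] at h
    exact blockRotation_apply_ne _ h
  · have := card_le_numCycles (σ := e.permCongr (blockRotation j k))
      (f := Sum.map Prod.fst Prod.fst ∘ e.symm)
      ((Sum.map_surjective.2 ⟨Prod.fst_surjective, Prod.fst_surjective⟩).comp e.symm.surjective)
      (fun v => by simp only [Function.comp_apply, permCongr_apply, symm_apply_apply,
        blockIndex_blockRotation])
    simpa using this

end Equiv.Perm

theorem pwidth_at_least_three_general (p n : ℕ) (hp : p.Prime)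
    (h1 : 4 * p + 3 < 3 * n) (h2 : n < 2 * p) :
    ∃ g ∈ alternatingGroup (Fin n), ∀ x y : Equiv.Perm (Fin n),
      x ^ p = 1 → y ^ p = 1 → g ≠ x * y := by
  obtain ⟨j, k, rfl, hk, hjk⟩ :
      ∃ j k, n = 3 * j + 2 * k ∧ Even k ∧ 2 * p < 4 * j + 3 * k :=
    ⟨(4 - n % 4) % 4, (n - 3 * ((4 - n % 4) % 4)) / 2, by omega, Nat.even_iff.2 (by omega),
      by omega⟩
  obtain ⟨g, hgA, hg, hcyc⟩ := exists_mem_alternatingGroup_apply_ne_add_le_numCycles (j := j) hk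
  refine ⟨g, hgA, fun x y hx hy hxy => ?_⟩
  have := numCycles_add_card_le_of_pow_prime hp (by simp; omega) (by simp; omega) hg hx hy hxy
  rw [Fintype.card_fin] at this
  omega

/-- For `p ≥ 5` prime and `2p > n > (4p+3)/3`, not every element of `A_n` is a
product of two elements of order dividing `p`; hence the `p`-width is at least 3. -/
theorem pwidth_at_least_three (p n : ℕ) (hp : p.Prime) (hp5 : 5 ≤ p)
    (h1 : 4 * p + 3 < 3 * n) (h2 : n < 2 * p) :
    ∃ g ∈ alternatingGroup (Fin n), ∀ x y : Equiv.Perm (Fin n),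
      x ^ p = 1 → y ^ p = 1 → g ≠ x * y :=
  pwidth_at_least_three_general p n hp h1 h2
end

section
/- Let p be an odd prime and g = g₁⋯g_k a product of k ≥ 3 pairwise disjoint nontrivial cycles each of length < p, with |supp(g)| + c*(g) > 2p if g is even, or > 2p − 1 if g is odd. Then there exists a nonempty subcollection of the cycles whose product g' satisfies |supp(g')| ≥ p, and |supp(g')| + c*(g') ≤ 2p if g' is even, or ≤ 2p − 1 if g' is odd. -/
/-!
For disjoint cycles of lengths `ℓ₁, …, ℓ_m` the product has `|supp| + c* = ∑ ℓᵢ + m` and sign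
`(-1) ^ (∑ ℓᵢ + m)`, so by parity the hypothesis says `∑ ℓᵢ + m > 2p` and the conclusion asks for
`∑ ℓᵢ + m ≤ 2p`. Since every `ℓᵢ ≥ 2`, all cycles together have `∑ ℓᵢ ≥ p`. Now discard a shortest
cycle while `∑ ℓᵢ + m > 2p`: as `ℓᵢ < p`, a counting argument shows that the remaining lengths
still sum to at least `p`.
-/

open Finset Equiv.Perm

theorem List.exists_sublist_le_sum_map_and_sum_map_add_length_le {α : Type*} [DecidableEq α]
    (f : α → ℕ) {p : ℕ} (hp : 0 < p) (l : List α) (hf : ∀ a ∈ l, 0 < f a ∧ f a < p)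
    (hl : p ≤ (l.map f).sum) :
    ∃ M, M ≠ [] ∧ M.Sublist l ∧ p ≤ (M.map f).sum ∧ (M.map f).sum + M.length ≤ 2 * p := by
  by_cases hw : (l.map f).sum + l.length ≤ 2 * p
  · exact ⟨l, by rintro rfl; simp at hl; omega, .refl l, hl, hw⟩
  have hne : l.toFinset.Nonempty := by
    rw [List.toFinset_nonempty_iff]; rintro rfl; simp at hl; omega
  obtain ⟨a, ha, hmin⟩ := l.toFinset.exists_min_image f hne
  rw [List.mem_toFinset] at ha
  have hsum : f a + ((l.erase a).map f).sum = (l.map f).sum := by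
    rw [← List.sum_cons, ← List.map_cons, (List.perm_cons_erase ha).symm.map f |>.sum_eq]
  have hlen : (l.erase a).length + 1 = l.length := List.length_erase_add_one ha
  have hcount : l.length * f a ≤ (l.map f).sum := by
    simpa using List.card_nsmul_le_sum (l.map f) (f a)
      (by simpa using fun b hb => hmin b (List.mem_toFinset.2 hb))
  -- With `S = ∑ f`, `m = l.length`, `x = f a`: if `S < p + x`, then `m ≥ 2p + 1 - S ≥ p + 2 - x`,
  -- so `S ≥ m x ≥ (p + 2 - x) x = p + x + (x - 1)(p - x) ≥ p + x`.
  have hrest : p + f a ≤ (l.map f).sum := by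
    obtain ⟨hpos, hlt⟩ := hf a ha
    by_contra! h
    have hm : p + 2 ≤ l.length + f a := by omega
    nlinarith [Nat.mul_le_mul_right (f a) hm, Nat.mul_le_mul (Nat.sub_le_sub_right hpos.le 1)
      (Nat.sub_le_sub_right hlt.le (f a))]
  obtain ⟨M, hM, hMl, hpM, hwM⟩ :=
    exists_sublist_le_sum_map_and_sum_map_add_length_le f hp (l.erase a)
      (fun b hb => hf b (List.mem_of_mem_erase hb)) (by omega)
  exact ⟨M, hM, hMl.trans l.erase_sublist, hpM, hwM⟩
termination_by l.length

namespace Equiv.Perm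

variable {α : Type*} [Fintype α] [DecidableEq α]

theorem sign_eq_neg_one_pow_card_support_add_card_cycleType (σ : Perm α) :
    sign σ = (-1 : ℤˣ) ^ (#σ.support + σ.cycleType.card) := by
  rw [sign_of_cycleType, sum_cycleType]

theorem odd_card_support_add_card_cycleType_of_sign_eq_neg_one {σ : Perm α}
    (h : sign σ = -1) : Odd (#σ.support + σ.cycleType.card) := by
  rwa [sign_eq_neg_one_pow_card_support_add_card_cycleType, neg_one_pow_eq_neg_one_iff_odd
    (by decide)] at h

theorem card_cycleType_prod_of_pairwise_disjoint {l : List (Perm α)}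
    (hc : ∀ c ∈ l, c.IsCycle) (hd : l.Pairwise Disjoint) :
    l.prod.cycleType.card = l.length := by
  simp [cycleType_eq l rfl hc hd]

end Equiv.Perm

theorem exists_good_subelement_general (p n : ℕ) (hp : p.Prime)
    (L : List (Equiv.Perm (Fin n)))
    (hcyc : ∀ c ∈ L, c.IsCycle ∧ c.support.card < p)
    (hdisj : L.Pairwise Equiv.Perm.Disjoint)
    (hbig : (Equiv.Perm.sign L.prod = 1 →
        2 * p < L.prod.support.card + L.prod.cycleType.card) ∧
      (Equiv.Perm.sign L.prod = -1 →
        2 * p - 1 < L.prod.support.card + L.prod.cycleType.card)) :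
    ∃ M : List (Equiv.Perm (Fin n)), M ≠ [] ∧ M.Sublist L ∧
      p ≤ M.prod.support.card ∧
      (Equiv.Perm.sign M.prod = 1 →
        M.prod.support.card + M.prod.cycleType.card ≤ 2 * p) ∧
      (Equiv.Perm.sign M.prod = -1 →
        M.prod.support.card + M.prod.cycleType.card ≤ 2 * p - 1) := by
  have hsuppL := card_support_prod_list_of_pairwise_disjoint hdisj
  have hcardL := card_cycleType_prod_of_pairwise_disjoint (fun c hc => (hcyc c hc).1) hdisj
  have hwL : 2 * p < #L.prod.support + L.prod.cycleType.card := by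
    rcases Int.units_eq_one_or (sign L.prod) with h | h
    · exact hbig.1 h
    · obtain ⟨k, hk⟩ := odd_card_support_add_card_cycleType_of_sign_eq_neg_one h
      have := hbig.2 h
      omega
  have htwo : L.length * 2 ≤ (L.map (card ∘ support)).sum := by
    simpa using List.card_nsmul_le_sum (L.map (card ∘ support)) 2
      (by simpa using fun c hc => (hcyc c hc).1.two_le_card_support)
  obtain ⟨M, hM, hML, hpM, hwM⟩ :=
    List.exists_sublist_le_sum_map_and_sum_map_add_length_le (card ∘ support) hp.pos L
      (fun c hc => ⟨two_pos.trans_le (hcyc c hc).1.two_le_card_support, (hcyc c hc).2⟩)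
      (by omega)
  have hsuppM := card_support_prod_list_of_pairwise_disjoint (hdisj.sublist hML)
  have hcardM := card_cycleType_prod_of_pairwise_disjoint
    (fun c hc => (hcyc c (hML.subset hc)).1) (hdisj.sublist hML)
  refine ⟨M, hM, hML, hsuppM ▸ hpM, fun _ => by omega, fun h => ?_⟩
  obtain ⟨k, hk⟩ := odd_card_support_add_card_cycleType_of_sign_eq_neg_one h
  omega

/-- If `g` is a product of `k ≥ 3` pairwise disjoint nontrivial cycles of
length `< p` with `|supp g| + c*(g) > 2p` (if `g` even) or `> 2p - 1` (if `g` odd),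
then some nonempty subcollection of the cycles has product `g'` with `|supp g'| ≥ p`
and `|supp g'| + c*(g') ≤ 2p` (if `g'` even) or `≤ 2p - 1` (if `g'` odd). -/
theorem exists_good_subelement (p n : ℕ) (hp : p.Prime) (hodd : Odd p)
    (L : List (Equiv.Perm (Fin n))) (hk : 3 ≤ L.length)
    (hcyc : ∀ c ∈ L, c.IsCycle ∧ c.support.card < p)
    (hdisj : L.Pairwise Equiv.Perm.Disjoint)
    (hbig : (Equiv.Perm.sign L.prod = 1 →
        2 * p < L.prod.support.card + L.prod.cycleType.card) ∧
      (Equiv.Perm.sign L.prod = -1 →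
        2 * p - 1 < L.prod.support.card + L.prod.cycleType.card)) :
    ∃ M : List (Equiv.Perm (Fin n)), M ≠ [] ∧ M.Sublist L ∧
      p ≤ M.prod.support.card ∧
      (Equiv.Perm.sign M.prod = 1 →
        M.prod.support.card + M.prod.cycleType.card ≤ 2 * p) ∧
      (Equiv.Perm.sign M.prod = -1 →
        M.prod.support.card + M.prod.cycleType.card ≤ 2 * p - 1) :=
  exists_good_subelement_general p n hp L hcyc hdisj hbig
end

section
/- In S_n, for distinct letters 2, 3, 2̄, 3̄ and p−4 further distinct letters o_1,…,o_{p−4} (p ≥ 5 prime), the product of transpositions (2 3)(2̄ 3̄) equals the product of two p-cycles: (o_1 … o_{p−4} 3̄ 3 2̄ 2)(3 2̄ 2 3̄ o_{p−4} … o_1). -/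
/-!
Write `σ = (x₂ x₃)` and `c` for the second cycle. Since `σ` fixes `y₂`, `y₃` and every `oᵢ`,
the first cycle is `c` reversed with `x₂`, `x₃` exchanged, i.e. `σ c⁻¹ σ⁻¹`. The product of the
two cycles is therefore `σ (c⁻¹ σ c)`, and `c⁻¹ σ c` is the transposition of `c⁻¹ x₂ = y₂` and
`c⁻¹ x₃ = y₃`, which commutes with `σ`.
-/

namespace List

variable {α : Type*} [DecidableEq α]

theorem formPerm_map_perm (σ : Equiv.Perm α) :
    ∀ l : List α, (l.map σ).formPerm = σ * l.formPerm * σ⁻¹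
  | [] => by simp
  | [a] => by simp
  | a :: b :: l => by
    calc ((a :: b :: l).map σ).formPerm
        = Equiv.swap (σ a) (σ b) * ((b :: l).map σ).formPerm := by simp
      _ = (σ * Equiv.swap a b * σ⁻¹) * (σ * (b :: l).formPerm * σ⁻¹) := by
          rw [Equiv.swap_apply_apply, formPerm_map_perm σ (b :: l)]
      _ = σ * (a :: b :: l).formPerm * σ⁻¹ := by
          rw [formPerm_cons_cons]; group

theorem formPerm_append_cons_cons_apply {l₁ l₂ : List α} {a b : α}
    (h : (l₁ ++ a :: b :: l₂).Nodup) : (l₁ ++ a :: b :: l₂).formPerm a = b := by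
  have hrot : l₁ ++ a :: b :: l₂ ~r a :: b :: (l₂ ++ l₁) := by
    simpa using isRotated_append (l := l₁) (l' := a :: b :: l₂)
  rw [formPerm_eq_of_isRotated h hrot]
  exact formPerm_apply_head _ _ _ (hrot.nodup_iff.mp h)

end List

open List in
theorem two_transpositions_as_two_p_cycles_general {α : Type*} [DecidableEq α]
    (x2 x3 y2 y3 : α) (os : List α)
    (hnd : (x2 :: x3 :: y2 :: y3 :: os).Nodup) :
    Equiv.swap y2 y3 * Equiv.swap x2 x3 =
      List.formPerm ([x3, y2, x2, y3] ++ os.reverse) *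
        List.formPerm (os ++ [y3, x3, y2, x2]) := by
  set σ := Equiv.swap x2 x3
  set c := formPerm (os ++ [y3, x3, y2, x2])
  have hL : (os ++ [y3, x3, y2, x2]).Nodup := by
    rw [nodup_append_comm]; simp only [nodup_cons, mem_cons, not_or] at hnd ⊢; grind
  simp only [nodup_cons, mem_cons, not_or] at hnd
  obtain ⟨⟨hx23, hx2y2, hx2y3, hx2os⟩, ⟨hx3y2, hx3y3, hx3os⟩, ⟨hy23, -⟩, -, -⟩ := hnd
  have hfirst : [x3, y2, x2, y3] ++ os.reverse = (os ++ [y3, x3, y2, x2]).reverse.map σ := by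
    have hos : os.map σ = os := (map_congr_left fun o ho ↦ Equiv.swap_apply_of_ne_of_ne
      (by rintro rfl; exact hx2os ho) (by rintro rfl; exact hx3os ho)).trans (map_id' os)
    rw [reverse_append, map_append, map_reverse (l := os), hos]
    simp [σ, Equiv.swap_apply_of_ne_of_ne, Ne.symm hx2y2, Ne.symm hx3y2, Ne.symm hx2y3,
      Ne.symm hx3y3]
  have hcy3 : c y3 = x3 := formPerm_append_cons_cons_apply (l₂ := [y2, x2]) hL
  have hcy2 : c y2 = x2 := by
    have h := formPerm_append_cons_cons_apply (l₁ := os ++ [y3, x3]) (l₂ := []) (by simpa using hL)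
    rwa [append_assoc] at h
  have hconj : c⁻¹ * σ * c = Equiv.swap y2 y3 := by
    rw [← Equiv.Perm.inv_eq_iff_eq.mpr hcy2.symm, ← Equiv.Perm.inv_eq_iff_eq.mpr hcy3.symm,
      Equiv.swap_apply_apply, inv_inv]
  have hcomm : Commute (Equiv.swap y2 y3) σ :=
    (Equiv.Perm.disjoint_swap_swap (by
      simp [hy23, hx23, Ne.symm hx2y2, Ne.symm hx2y3, Ne.symm hx3y2, Ne.symm hx3y3])).commute
  calc Equiv.swap y2 y3 * σ = σ * (c⁻¹ * σ * c) := by rw [hconj, hcomm.eq]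
    _ = (σ * c⁻¹ * σ⁻¹) * c := by rw [show σ⁻¹ = σ from Equiv.swap_inv x2 x3]; group
    _ = _ := by rw [hfirst, formPerm_map_perm, formPerm_reverse]

/-- The product of two disjoint transpositions `(2 3)(2̄ 3̄)` (composed left to
right) equals the product of the two `p`-cycles
`(o_1 … o_{p-4} 3̄ 3 2̄ 2)(3 2̄ 2 3̄ o_{p-4} … o_1)`. Multiplication below is
function composition, so the left-to-right product `a · b` is written `b * a`. -/
theorem two_transpositions_as_two_p_cycles {α : Type*} [DecidableEq α]
    (p : ℕ) (hp : p.Prime) (hp5 : 5 ≤ p)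
    (x2 x3 y2 y3 : α) (os : List α) (hos : os.length = p - 4)
    (hnd : (x2 :: x3 :: y2 :: y3 :: os).Nodup) :
    Equiv.swap y2 y3 * Equiv.swap x2 x3 =
      List.formPerm ([x3, y2, x2, y3] ++ os.reverse) *
        List.formPerm (os ++ [y3, x3, y2, x2]) :=
  two_transpositions_as_two_p_cycles_general x2 x3 y2 y3 os hnd
end

section
/- Let p be an odd prime and let d₁, d₂ be two disjoint (p−1)-cycles in S_n. Then d₁d₂ is a product of two p-cycles A·B with supp(A), supp(B) ⊆ supp(d₁d₂) and |supp(A) ∩ supp(B)| = 2. -/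
/-!
Pick `a` moved by `d₁` and `b` moved by `d₂`. Then
`d₁ * d₂ = (d₁ * swap a b) * (swap a b * d₂)`, and each factor is the cycle `dᵢ` with one more
point spliced in: writing `d₂ = formPerm (b :: l)`, one has
`swap a b * d₂ = formPerm (a :: b :: l)`, and `d₁ * swap a b = swap (d₁ a) b * d₁` is handled
the same way. The two supports are
`supp d₁ ∪ {b}` and `supp d₂ ∪ {a}`, which meet exactly in `{a, b}`.
-/

open Equiv Finset

namespace Equiv.Perm

variable {α : Type*} [DecidableEq α] [Fintype α] {f : Perm α} {a b : α}

section

open List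

theorem IsCycle.exists_formPerm_cons_eq (hf : f.IsCycle) (ha : a ∈ f.support) :
    ∃ l, (a :: l).Nodup ∧ formPerm (a :: l) = f := by
  have hform := formPerm_toList f a
  rw [hf.cycleOf_eq (mem_support.mp ha)] at hform
  have hnd := nodup_toList f a
  match hl : toList f a, hform, hnd with
  | [], _, _ => exact absurd hl (toList_eq_nil_iff.not.mpr (not_not.mpr ha))
  | x :: l, hform, hnd =>
    have hx : x = a := by simpa [hl] using toList_getElem_zero f a ha
    exact ⟨l, hx ▸ hnd, hx ▸ hform⟩

theorem IsCycle.swap_mul_of_mem_of_notMem (hf : f.IsCycle) (ha : a ∈ f.support)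
    (hb : b ∉ f.support) :
    (swap b a * f).IsCycle ∧ (swap b a * f).support = insert b f.support := by
  obtain ⟨l, hl, rfl⟩ := hf.exists_formPerm_cons_eq ha
  have hl_ne : ∀ x, a :: l ≠ [x] := by
    rintro x h
    rw [h, formPerm_singleton] at hf
    exact hf.ne_one rfl
  rw [support_formPerm_of_nodup _ hl hl_ne, mem_toFinset] at hb
  have hnd : (b :: a :: l).Nodup := nodup_cons.mpr ⟨hb, hl⟩
  rw [← formPerm_cons_cons]
  refine ⟨isCycle_formPerm hnd (by simp), ?_⟩
  rw [support_formPerm_of_nodup _ hnd (by simp), support_formPerm_of_nodup _ hl hl_ne]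
  exact toFinset_cons

end

theorem IsCycle.mul_swap_of_mem_of_notMem (hf : f.IsCycle) (ha : a ∈ f.support)
    (hb : b ∉ f.support) :
    (f * swap a b).IsCycle ∧ (f * swap a b).support = insert b f.support := by
  rw [mul_swap_eq_swap_mul, notMem_support.mp hb, swap_comm]
  exact hf.swap_mul_of_mem_of_notMem (apply_mem_support.mpr ha) hb

end Equiv.Perm

theorem Finset.insert_inter_insert_of_disjoint {α : Type*} [DecidableEq α] {s t : Finset α}
    {a b : α} (hst : Disjoint s t) (ha : a ∈ s) (hb : b ∈ t) :
    insert b s ∩ insert a t = {a, b} := by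
  ext x
  simp only [mem_inter, mem_insert, mem_singleton]
  have := Finset.disjoint_left.mp hst
  grind

theorem two_p_minus_one_cycles_general (p n : ℕ)
    (d₁ d₂ : Equiv.Perm (Fin n)) (hd₁ : d₁.IsCycle) (hd₂ : d₂.IsCycle)
    (hc₁ : d₁.support.card = p - 1) (hc₂ : d₂.support.card = p - 1)
    (hdisj : d₁.Disjoint d₂) :
    ∃ A B : Equiv.Perm (Fin n), A.IsCycle ∧ A.support.card = p ∧
      B.IsCycle ∧ B.support.card = p ∧ d₁ * d₂ = A * B ∧
      A.support ⊆ (d₁ * d₂).support ∧ B.support ⊆ (d₁ * d₂).support ∧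
      (A.support ∩ B.support).card = 2 := by
  have hsupp := hdisj.support_mul
  have hdS := hdisj.disjoint_support
  obtain ⟨a, ha⟩ := hd₁.nonempty_support
  obtain ⟨b, hb⟩ := hd₂.nonempty_support
  have ha₂ : a ∉ d₂.support := disjoint_left.mp hdS ha
  have hb₁ : b ∉ d₁.support := disjoint_right.mp hdS hb
  obtain ⟨hA, hA_supp⟩ := hd₁.mul_swap_of_mem_of_notMem ha hb₁
  obtain ⟨hB, hB_supp⟩ := hd₂.swap_mul_of_mem_of_notMem hb ha₂
  have hd₁_card := hd₁.two_le_card_support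
  refine ⟨d₁ * swap a b, swap a b * d₂, hA, ?_, hB, ?_, ?_, ?_, ?_, ?_⟩
  · rw [hA_supp, card_insert_of_notMem hb₁]; omega
  · rw [hB_supp, card_insert_of_notMem ha₂]; omega
  · rw [mul_assoc, swap_mul_self_mul]
  · rw [hA_supp, hsupp]
    exact insert_subset (mem_union_right _ hb) subset_union_left
  · rw [hB_supp, hsupp]
    exact insert_subset (mem_union_left _ ha) subset_union_right
  · rw [hA_supp, hB_supp, insert_inter_insert_of_disjoint hdS ha hb]
    exact card_pair (ne_of_mem_of_not_mem ha hb₁)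

/-- Two disjoint `(p-1)`-cycles (`p` an odd prime) multiply to a product of two
`p`-cycles whose supports lie in the support of the product and meet in exactly
two points. -/
theorem two_p_minus_one_cycles (p n : ℕ) (hp : p.Prime) (hodd : Odd p)
    (d₁ d₂ : Equiv.Perm (Fin n)) (hd₁ : d₁.IsCycle) (hd₂ : d₂.IsCycle)
    (hc₁ : d₁.support.card = p - 1) (hc₂ : d₂.support.card = p - 1)
    (hdisj : d₁.Disjoint d₂) :
    ∃ A B : Equiv.Perm (Fin n), A.IsCycle ∧ A.support.card = p ∧
      B.IsCycle ∧ B.support.card = p ∧ d₁ * d₂ = A * B ∧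
      A.support ⊆ (d₁ * d₂).support ∧ B.support ⊆ (d₁ * d₂).support ∧
      (A.support ∩ B.support).card = 2 :=
  two_p_minus_one_cycles_general p n d₁ d₂ hd₁ hd₂ hc₁ hc₂ hdisj
end

section
/- Fix an odd prime p and let A, B be two p-cycles in S_n with m = |supp(A) ∩ supp(B)| ≥ 1. Then |supp(AB)| ≤ 2p − m and c*(AB) ≤ min(m, (2p − m)/2). -/
/-!
Since `supp (AB) ⊆ supp A ∪ supp B`, inclusion–exclusion gives `|supp (AB)| ≤ 2p - m`, and
as every nontrivial cycle moves at least two points, `2 c*(AB) ≤ |supp (AB)|`.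

The bound `c*(AB) ≤ m` is Bertram's observation that every cycle `c` of `AB` meets
`supp A ∩ supp B`. Otherwise `AB` acts on `T = supp c` avoiding that intersection: on
`T ∩ supp A` it agrees with `A`, so `T` is stable under the cycle `A` there and would swallow
all of `supp A`; hence `T` misses `supp A`, `AB` agrees with `B` on `T`, and `T` swallows
`supp B` instead. Sending each point of the intersection to the cycle through it then covers
all cycles.
-/

namespace Equiv.Perm

variable {α : Type*} [DecidableEq α] [Fintype α]

theorem IsCycle.support_subset_of_mapsTo_s19 {σ : Perm α} (hσ : σ.IsCycle) {U : Finset α}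
    (hU : ∀ y ∈ U, y ∈ σ.support → σ y ∈ U) {x : α} (hxU : x ∈ U)
    (hxσ : x ∈ σ.support) : σ.support ⊆ U := by
  have hpow : ∀ k : ℕ, (σ ^ k) x ∈ U := by
    intro k
    induction k with
    | zero => exact hxU
    | succ k ih =>
      rw [pow_succ', mul_apply]
      exact hU _ ih (pow_apply_mem_support.mpr hxσ)
  intro z hz
  obtain ⟨k, rfl⟩ := hσ.exists_pow_eq (mem_support.mp hxσ) (mem_support.mp hz)
  exact hpow k

theorem IsCycle.not_disjoint_support_of_mem_cycleFactorsFinset_mul {σ τ c : Perm α}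
    (hσ : σ.IsCycle) (hτ : τ.IsCycle) (hστ : (σ.support ∩ τ.support).Nonempty)
    (hc : c ∈ (σ * τ).cycleFactorsFinset) :
    ¬_root_.Disjoint c.support (σ.support ∩ τ.support) := by
  intro hdisj
  obtain ⟨s, hs⟩ := hστ
  obtain ⟨hsσ, hsτ⟩ := Finset.mem_inter.mp hs
  have hs_notMem : s ∉ c.support := fun h => Finset.disjoint_left.mp hdisj h hs
  have hagree := (mem_cycleFactorsFinset_iff.mp hc).2
  have hcσ : _root_.Disjoint c.support σ.support := by
    refine Finset.disjoint_left.mpr fun x hx hxσ =>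
      hs_notMem (hσ.support_subset_of_mapsTo_s19 (fun y hy hyσ => ?_) hx hxσ hsσ)
    have hτy : τ y = y := notMem_support.mp fun hyτ =>
      Finset.disjoint_left.mp hdisj hy (Finset.mem_inter.mpr ⟨hyσ, hyτ⟩)
    have hcy : c y = σ y := by rw [hagree y hy, mul_apply, hτy]
    exact hcy ▸ apply_mem_support.mpr hy
  obtain ⟨x, hx⟩ := (mem_cycleFactorsFinset_iff.mp hc).1.nonempty_support
  have hxτ : x ∈ τ.support := by
    have hx' := support_mul_le σ τ (mem_cycleFactorsFinset_support_le hc hx)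
    exact (Finset.mem_union.mp hx').resolve_left (Finset.disjoint_left.mp hcσ hx)
  refine hs_notMem (hτ.support_subset_of_mapsTo_s19 (fun y hy _ => ?_) hx hxτ hsτ)
  have hcy : c y ∉ σ.support := Finset.disjoint_left.mp hcσ (apply_mem_support.mpr hy)
  have hτy : τ y = c y :=
    σ.injective (by rw [notMem_support.mp hcy, ← mul_apply, ← hagree y hy])
  exact hτy ▸ apply_mem_support.mpr hy

theorem card_cycleType_le_of_forall_not_disjoint {π : Perm α} {S : Finset α}
    (h : ∀ c ∈ π.cycleFactorsFinset, ¬_root_.Disjoint c.support S) :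
    Multiset.card π.cycleType ≤ S.card := by
  rw [cycleType_def, Multiset.card_map]
  refine Finset.card_le_card_of_surjOn π.cycleOf fun c hc => ?_
  obtain ⟨x, hxc, hxS⟩ := Finset.not_disjoint_iff.mp (h c hc)
  exact ⟨x, hxS, (cycle_is_cycleOf hxc hc).symm⟩

theorem two_mul_card_cycleType_le_card_support (π : Perm α) :
    2 * Multiset.card π.cycleType ≤ π.support.card := by
  rw [← sum_cycleType, mul_comm, ← smul_eq_mul]
  exact Multiset.card_nsmul_le_sum fun _ h => two_le_of_mem_cycleType h

end Equiv.Perm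

theorem p_cycles_intersection_bounds_general (p n : ℕ)
    (A B : Equiv.Perm (Fin n)) (hA : A.IsCycle) (hB : B.IsCycle)
    (hcA : A.support.card = p) (hcB : B.support.card = p) (m : ℕ)
    (hm : m = (A.support ∩ B.support).card) (hm1 : 1 ≤ m) :
    (A * B).support.card ≤ 2 * p - m ∧
      (A * B).cycleType.card ≤ m ∧
      2 * (A * B).cycleType.card ≤ 2 * p - m := by
  have hunion : (A.support ∪ B.support).card = 2 * p - m := by
    have := Finset.card_union_add_card_inter A.support B.support
    omega
  have hsupp : (A * B).support.card ≤ 2 * p - m :=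
    hunion ▸ Finset.card_le_card (Equiv.Perm.support_mul_le A B)
  have hinter : (A.support ∩ B.support).Nonempty := Finset.card_pos.mp (by omega)
  refine ⟨hsupp, hm ▸ Equiv.Perm.card_cycleType_le_of_forall_not_disjoint fun c hc => ?_,
    (Equiv.Perm.two_mul_card_cycleType_le_card_support _).trans hsupp⟩
  exact hA.not_disjoint_support_of_mem_cycleFactorsFinset_mul hB hinter hc

/-- For two `p`-cycles `A`, `B` with supports meeting in `m ≥ 1` points,
`|supp (AB)| ≤ 2p - m` and `c*(AB) ≤ min(m, (2p - m)/2)`. -/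
theorem p_cycles_intersection_bounds (p n : ℕ) (hp : p.Prime) (hodd : Odd p)
    (A B : Equiv.Perm (Fin n)) (hA : A.IsCycle) (hB : B.IsCycle)
    (hcA : A.support.card = p) (hcB : B.support.card = p) (m : ℕ)
    (hm : m = (A.support ∩ B.support).card) (hm1 : 1 ≤ m) :
    (A * B).support.card ≤ 2 * p - m ∧
      (A * B).cycleType.card ≤ m ∧
      2 * (A * B).cycleType.card ≤ 2 * p - m :=
  p_cycles_intersection_bounds_general p n A B hA hB hcA hcB m hm hm1
end
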